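/- arXiv:1812.06339 — 2 statements merged into one kernel-verified Lean document; each statement's English description precedes it below -/
import Mathlib

section
/- On the tangent sphere bundle of an oriented Riemannian (n+1)-manifold, for every 0 ≤ i ≤ n the identity α_{n−1} ∘ (B^{n−i} ∧ 1^i) = i!·(n−i+1)!·α_{i−1} holds (a pointwise multilinear-algebra identity), where α_{−1} = 0. -/
noncomputable section

/-- Model for the tangent space to the unit tangent sphere bundle `SM` of an oriented
Riemannian `(n+1)`-manifold at a point, in an adapted frame: coordinates `0,…,n` are
horizontal (`e_0` being the geodesic-flow direction) and coordinates `n+1,…,2n` are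
vertical, the mirrors of `e_1,…,e_n`. -/
abbrev VS (n : ℕ) := Fin (2 * n + 1) → ℝ

/-- The mirror endomorphism `B`: it sends each horizontal `e_j`, `1 ≤ j ≤ n`, to the
corresponding vertical `e_{n+j}` and kills `e_0` and the vertical vectors. -/
def Bmap {n : ℕ} (v : VS n) : VS n :=
  fun j => if h : n + 1 ≤ (j : ℕ) then v ⟨(j : ℕ) - n, by have := j.2; omega⟩ else 0

/-- the index of the `j`-th vertical basis vector `e_{n+1+j}` -/
def vertIdx {n : ℕ} (j : Fin n) : Fin (2 * n + 1) := ⟨n + 1 + (j : ℕ), by have := j.2; omega⟩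

/-- the volume form of the fibers, `α_n = e^{n+1} ∧ ⋯ ∧ e^{2n}` -/
def alphaTop {n : ℕ} (w : Fin n → VS n) : ℝ :=
  Matrix.det (Matrix.of fun k j => w k (vertIdx j))

/-- composition of an `n`-linear form `T` with `B^{n-i} ∧ 1^i`, followed by the
(unnormalized) alternating operator: `(T ∘ (B^{n-i} ∧ 1^i))(Y₁,…,Y_n) =
∑_σ sgn σ · T(B Y_{σ₁},…,B Y_{σ_{n-i}}, Y_{σ_{n-i+1}},…,Y_{σ_n})` -/
def compB {n : ℕ} (T : (Fin n → VS n) → ℝ) (i : ℕ) : (Fin n → VS n) → ℝ :=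
  fun w => ∑ σ : Equiv.Perm (Fin n), ((Equiv.Perm.sign σ : ℤ) : ℝ) *
    T (fun k => if (k : ℕ) < n - i then Bmap (w (σ k)) else w (σ k))

/-- the fundamental `n`-forms `α_i = n_i · α_n ∘ (B^{n-i} ∧ 1^i)`, `n_i = 1/(i!(n-i)!)`,
with the conventions `α_i = 0` for `i < 0` and for `i > n` -/
def alphaF {n : ℕ} (i : ℤ) : (Fin n → VS n) → ℝ :=
  if 0 ≤ i ∧ i ≤ (n : ℤ) then
    fun w => ((i.toNat.factorial * (n - i.toNat).factorial : ℕ) : ℝ)⁻¹ * compB alphaTop i.toNat w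
  else 0

section Aux

open Equiv Matrix Finset

variable {n : ℕ}

/-- the `(j+1)`-st (horizontal) coordinate of a vector -/
private def hcoord (x : VS n) (j : Fin n) : ℝ := x ⟨(j : ℕ) + 1, by have := j.2; omega⟩

private lemma bmap_vertIdx (x : VS n) (j : Fin n) : Bmap x (vertIdx j) = hcoord x j := by
  have hv : ((vertIdx j : Fin (2 * n + 1)) : ℕ) = n + 1 + (j : ℕ) := rfl
  simp only [Bmap]
  rw [dif_pos (show n + 1 ≤ ((vertIdx j : Fin (2 * n + 1)) : ℕ) by omega)]
  simp only [hcoord]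
  congr 1
  simp only [Fin.mk.injEq]
  omega

private lemma bmap_small (x : VS n) (a : Fin (2 * n + 1)) (h : (a : ℕ) < n + 1) :
    Bmap x a = 0 := by
  simp only [Bmap]
  rw [dif_neg (by omega)]

private lemma hcoord_bmap (x : VS n) (j : Fin n) : hcoord (Bmap x) j = 0 := by
  simp only [hcoord]
  exact bmap_small x _ (show (j : ℕ) + 1 < n + 1 by have := j.2; omega)

private lemma sign_cast_mul (σ τ : Perm (Fin n)) :
    ((Perm.sign (σ * τ) : ℤ) : ℝ) = ((Perm.sign σ : ℤ) : ℝ) * ((Perm.sign τ : ℤ) : ℝ) := by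
  rw [Perm.sign_mul, Units.val_mul, Int.cast_mul]

/-- the basic alternating sums: pattern of rows given by `p`. -/
private def Fsum (w : Fin n → VS n) (p : Fin n → Prop) [DecidablePred p] : ℝ :=
  ∑ σ : Perm (Fin n), ((Perm.sign σ : ℤ) : ℝ) *
    Matrix.det (Matrix.of fun k j =>
      if p k then hcoord (w (σ k)) j else w (σ k) (vertIdx j))

private lemma Fsum_invariant (w : Fin n → VS n) (p q : Fin n → Prop)
    [DecidablePred p] [DecidablePred q] (π : Perm (Fin n)) (h : ∀ k, p k ↔ q (π k)) :
    Fsum w p = Fsum w q := by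
  unfold Fsum
  refine Fintype.sum_equiv (Equiv.mulRight π⁻¹) _ _ (fun σ => ?_)
  simp only [Equiv.coe_mulRight]
  have hM : (Matrix.of fun k j => if p k then hcoord (w (σ k)) j else w (σ k) (vertIdx j))
      = (Matrix.of fun k j => if q k then hcoord (w ((σ * π⁻¹) k)) j
          else w ((σ * π⁻¹) k) (vertIdx j)).submatrix π id := by
    ext k j
    simp only [Matrix.submatrix_apply, Matrix.of_apply, id_eq, Perm.mul_apply,
      Perm.inv_def, Equiv.symm_apply_apply]
    by_cases hk : p k
    · rw [if_pos hk, if_pos ((h k).mp hk)]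
    · rw [if_neg hk, if_neg (fun hq => hk ((h k).mpr hq))]
  rw [hM, Matrix.det_permute]
  have h2 : ((Perm.sign (σ * π⁻¹) : ℤ) : ℝ)
      = ((Perm.sign σ : ℤ) : ℝ) * ((Perm.sign π : ℤ) : ℝ) := by
    rw [sign_cast_mul σ π⁻¹, Perm.sign_inv]
  rw [h2]
  ring

private lemma exists_perm_iff (p q : Fin n → Prop) [DecidablePred p] [DecidablePred q]
    (h : Fintype.card {k // p k} = Fintype.card {k // q k}) :
    ∃ π : Perm (Fin n), ∀ k, p k ↔ q (π k) := by
  have h' : Fintype.card {k // ¬ p k} = Fintype.card {k // ¬ q k} := by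
    rw [Fintype.card_subtype_compl, Fintype.card_subtype_compl, h]
  refine ⟨(Equiv.sumCompl p).symm.trans (((Fintype.equivOfCardEq h).sumCongr
    (Fintype.equivOfCardEq h')).trans (Equiv.sumCompl q)), fun k => ?_⟩
  by_cases hk : p k
  · simp only [Equiv.trans_apply, Equiv.sumCompl_symm_apply_of_pos hk,
      Equiv.sumCongr_apply, Sum.map_inl, Equiv.sumCompl_apply_inl]
    exact iff_of_true hk (Fintype.equivOfCardEq h ⟨k, hk⟩).2
  · simp only [Equiv.trans_apply, Equiv.sumCompl_symm_apply_of_neg hk,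
      Equiv.sumCongr_apply, Sum.map_inr, Equiv.sumCompl_apply_inr]
    exact iff_of_false hk (Fintype.equivOfCardEq h' ⟨k, hk⟩).2

private lemma card_val_lt (m : ℕ) (hm : m ≤ n) :
    Fintype.card {k : Fin n // (k : ℕ) < m} = m := by
  have e : {k : Fin n // (k : ℕ) < m} ≃ Fin m :=
    ⟨fun x => ⟨x.1, x.2⟩, fun y => ⟨⟨y.1, lt_of_lt_of_le y.2 hm⟩, y.2⟩,
      fun x => rfl, fun y => rfl⟩
  rw [Fintype.card_congr e, Fintype.card_fin]

private lemma sum_perm_zero (hn : 0 < n) (f : Fin n → ℝ) :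
    ∑ τ : Perm (Fin n), f (τ ⟨0, hn⟩) = ((n - 1).factorial : ℝ) * ∑ x, f x := by
  obtain ⟨m, rfl⟩ : ∃ m, n = m + 1 := ⟨n - 1, by omega⟩
  have hz : (⟨0, hn⟩ : Fin (m + 1)) = 0 := Fin.ext (by simp)
  simp only [hz]
  rw [← Equiv.sum_comp (Equiv.Perm.decomposeFin (n := m)).symm
      (fun τ : Perm (Fin (m + 1)) => f (τ 0))]
  rw [Fintype.sum_prod_type]
  simp only [Equiv.Perm.decomposeFin_symm_apply_zero]
  simp only [Finset.sum_const, Finset.card_univ, Fintype.card_perm, Fintype.card_fin,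
    nsmul_eq_mul]
  rw [Nat.add_sub_cancel, Finset.mul_sum]

private lemma compB_alphaTop_eq (w : Fin n → VS n) (m : ℕ) :
    compB alphaTop m w = Fsum w (fun k => (k : ℕ) < n - m) := by
  unfold compB Fsum alphaTop
  refine Finset.sum_congr rfl (fun σ _ => ?_)
  congr 1
  congr 1
  ext k j
  simp only [Matrix.of_apply]
  by_cases hk : (k : ℕ) < n - m
  · rw [if_pos hk, if_pos hk, bmap_vertIdx]
  · rw [if_neg hk, if_neg hk]

private lemma alphaF_eval (j : ℕ) (hj : j ≤ n) (w : Fin n → VS n) :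
    alphaF (n := n) (j : ℤ) w
      = ((j.factorial * (n - j).factorial : ℕ) : ℝ)⁻¹ * compB alphaTop j w := by
  rw [alphaF, if_pos ⟨Int.natCast_nonneg j, by exact_mod_cast hj⟩]
  simp only [Int.toNat_natCast]

private lemma alphaF_B_eq_zero (hn : 0 < n) (v : Fin n → VS n) :
    alphaF (n := n) ((n : ℤ) - 1) (fun k => Bmap (v k)) = 0 := by
  have hc : ((n : ℤ) - 1) = ((n - 1 : ℕ) : ℤ) := by omega
  rw [hc, alphaF_eval (n - 1) (by omega)]
  refine mul_eq_zero_of_right _ ?_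
  rw [compB]
  refine Finset.sum_eq_zero (fun τ _ => mul_eq_zero_of_right _ ?_)
  rw [alphaTop]
  apply Matrix.det_eq_zero_of_row_eq_zero ⟨0, hn⟩
  intro j
  simp only [Matrix.of_apply]
  have hzv : ((⟨0, hn⟩ : Fin n) : ℕ) = 0 := rfl
  rw [if_pos (show ((⟨0, hn⟩ : Fin n) : ℕ) < n - (n - 1) by omega)]
  rw [bmap_vertIdx]
  exact hcoord_bmap _ _


/-- the matrices appearing after composing `α_{n-1}` with the mirror operators -/
private def Dmat (w : Fin n → VS n) (i : ℕ) (σ τ : Equiv.Perm (Fin n)) :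
    Matrix (Fin n) (Fin n) ℝ :=
  Matrix.of fun k j => if (k : ℕ) < 1 ∨ ((τ k : Fin n) : ℕ) < n - i then
    hcoord (w (σ (τ k))) j else w (σ (τ k)) (vertIdx j)

private def Gsum (w : Fin n → VS n) (i : ℕ) (hn : 0 < n) (σ : Equiv.Perm (Fin n)) : ℝ :=
  ∑ τ : Equiv.Perm (Fin n), if n - i ≤ ((τ ⟨0, hn⟩ : Fin n) : ℕ) then
    ((Equiv.Perm.sign τ : ℤ) : ℝ) * (Dmat w i σ τ).det else 0

private lemma key (hn : 0 < n) (i : ℕ) (w : Fin n → VS n) (σ : Equiv.Perm (Fin n)) :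
    Fsum (fun k => if (k : ℕ) < n - i then Bmap (w (σ k)) else w (σ k))
        (fun k => (k : ℕ) < n - (n - 1)) = Gsum w i hn σ := by
  unfold Fsum Gsum
  refine Finset.sum_congr rfl (fun τ _ => ?_)
  have hzv : ((⟨0, hn⟩ : Fin n) : ℕ) = 0 := rfl
  by_cases hτ : n - i ≤ ((τ ⟨0, hn⟩ : Fin n) : ℕ)
  · rw [if_pos hτ]
    congr 1
    unfold Dmat
    congr 1
    ext k j
    simp only [Matrix.of_apply]
    by_cases hk : (k : ℕ) < n - (n - 1)
    · have hk1 : (k : ℕ) < 1 := by omega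
      have hkz : k = ⟨0, hn⟩ := Fin.ext (by omega)
      rw [if_pos hk, if_pos (Or.inl hk1)]
      have hne : ¬ (((τ k : Fin n) : ℕ) < n - i) := by rw [hkz]; omega
      rw [if_neg hne]
    · rw [if_neg hk]
      by_cases hk2 : ((τ k : Fin n) : ℕ) < n - i
      · rw [if_pos (Or.inr hk2), if_pos hk2, bmap_vertIdx]
      · rw [if_neg hk2, if_neg (by omega : ¬ ((k : ℕ) < 1 ∨ ((τ k : Fin n) : ℕ) < n - i))]
  · rw [if_neg hτ]
    refine mul_eq_zero_of_right _ ?_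
    apply Matrix.det_eq_zero_of_row_eq_zero ⟨0, hn⟩
    intro j
    simp only [Matrix.of_apply]
    rw [if_pos (show ((⟨0, hn⟩ : Fin n) : ℕ) < n - (n - 1) by omega)]
    rw [if_pos (show ((τ ⟨0, hn⟩ : Fin n) : ℕ) < n - i by omega)]
    exact hcoord_bmap _ _

private lemma perm_inner_sum {i : ℕ} (hn : 0 < n) (hi1 : 1 ≤ i) (hi : i ≤ n)
    (w : Fin n → VS n) (τ : Equiv.Perm (Fin n)) :
    ∑ σ : Equiv.Perm (Fin n), ((Equiv.Perm.sign σ : ℤ) : ℝ) *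
      (if n - i ≤ ((τ ⟨0, hn⟩ : Fin n) : ℕ) then
        ((Equiv.Perm.sign τ : ℤ) : ℝ) * (Dmat w i σ τ).det else 0)
    = if n - i ≤ ((τ ⟨0, hn⟩ : Fin n) : ℕ) then
        Fsum w (fun k => (k : ℕ) < n - (i - 1)) else 0 := by
  have hzv : ((⟨0, hn⟩ : Fin n) : ℕ) = 0 := rfl
  by_cases hτ : n - i ≤ ((τ ⟨0, hn⟩ : Fin n) : ℕ)
  · simp only [if_pos hτ]
    have h1 : ∑ σ : Equiv.Perm (Fin n), ((Equiv.Perm.sign σ : ℤ) : ℝ) *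
        (((Equiv.Perm.sign τ : ℤ) : ℝ) * (Dmat w i σ τ).det)
        = Fsum w (fun k => (k : ℕ) < 1 ∨ ((τ k : Fin n) : ℕ) < n - i) := by
      unfold Fsum
      refine Fintype.sum_equiv (Equiv.mulRight τ) _ _ (fun σ => ?_)
      simp only [Equiv.coe_mulRight]
      have hM : Dmat w i σ τ = Matrix.of fun (k j : Fin n) =>
          if (k : ℕ) < 1 ∨ ((τ k : Fin n) : ℕ) < n - i then hcoord (w ((σ * τ) k)) j
          else w ((σ * τ) k) (vertIdx j) := by
        unfold Dmat
        ext k j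
        simp only [Matrix.of_apply, Equiv.Perm.mul_apply]
      rw [hM, sign_cast_mul]
      ring
    rw [h1]
    have hdisj : Disjoint (Finset.univ.filter fun k : Fin n => (k : ℕ) < 1)
        (Finset.univ.filter fun k : Fin n => ((τ k : Fin n) : ℕ) < n - i) := by
      rw [Finset.disjoint_left]
      intro a ha1 ha2
      simp only [Finset.mem_filter, Finset.mem_univ, true_and] at ha1 ha2
      have hza : a = ⟨0, hn⟩ := Fin.ext (by omega)
      rw [hza] at ha2
      omega
    have e2 : {k : Fin n // ((τ k : Fin n) : ℕ) < n - i} ≃ {k : Fin n // (k : ℕ) < n - i} :=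
      Equiv.subtypeEquiv τ (fun k => Iff.rfl)
    have hc1 : Fintype.card {k : Fin n // (k : ℕ) < 1 ∨ ((τ k : Fin n) : ℕ) < n - i}
        = 1 + (n - i) := by
      rw [Fintype.card_subtype, Finset.filter_or, Finset.card_union_of_disjoint hdisj]
      congr 1
      · rw [← Fintype.card_subtype, card_val_lt 1 hn]
      · rw [← Fintype.card_subtype, Fintype.card_congr e2, card_val_lt (n - i) (by omega)]
    obtain ⟨π, hπ⟩ := exists_perm_iff
      (fun k : Fin n => (k : ℕ) < 1 ∨ ((τ k : Fin n) : ℕ) < n - i)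
      (fun k : Fin n => (k : ℕ) < n - (i - 1))
      (by rw [hc1, card_val_lt (n - (i - 1)) (by omega)]; omega)
    exact Fsum_invariant w _ _ π hπ
  · simp only [if_neg hτ, mul_zero, Finset.sum_const_zero]

end Aux

/-- The pointwise multilinear-algebra identity
`α_{n-1} ∘ (B^{n-i} ∧ 1^i) = i! (n-i+1)! · α_{i-1}`, for every `0 ≤ i ≤ n`
(with `α_{-1} = 0`). -/
theorem alpha_comp_mirror_identity (n : ℕ) (i : ℕ) (hi : i ≤ n) :
    compB (alphaF (n := n) ((n : ℤ) - 1)) i =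
      fun w => ((i.factorial * (n - i + 1).factorial : ℕ) : ℝ) * alphaF ((i : ℤ) - 1) w := by
  funext w
  rcases Nat.eq_zero_or_pos i with rfl | hipos
  · -- the case `i = 0`
    have hR : alphaF (n := n) (((0 : ℕ) : ℤ) - 1) = 0 := by
      rw [alphaF, if_neg (by omega)]
    rw [hR]
    simp only [Pi.zero_apply, mul_zero]
    rw [compB]
    refine Finset.sum_eq_zero (fun σ _ => ?_)
    rcases Nat.eq_zero_or_pos n with rfl | hn
    · rw [hR]
      simp
    · have harg : (fun k : Fin n => if (k : ℕ) < n - 0 then Bmap (w (σ k)) else w (σ k))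
          = fun k => Bmap (w (σ k)) := by
        funext k
        exact if_pos (by have := k.2; omega)
      rw [harg, alphaF_B_eq_zero hn, mul_zero]
  · -- the case `1 ≤ i`
    have hn : 0 < n := lt_of_lt_of_le hipos hi
    have hci : ((i : ℤ) - 1) = ((i - 1 : ℕ) : ℤ) := by omega
    rw [hci, alphaF_eval (i - 1) (by omega) w, compB_alphaTop_eq w (i - 1)]
    have hA : alphaF (n := n) ((n : ℤ) - 1)
        = fun u => (((n - 1).factorial * (n - (n - 1)).factorial : ℕ) : ℝ)⁻¹ *
            Fsum u (fun k => (k : ℕ) < n - (n - 1)) := by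
      funext u
      have hcn : ((n : ℤ) - 1) = ((n - 1 : ℕ) : ℤ) := by omega
      rw [hcn, alphaF_eval (n - 1) (by omega), compB_alphaTop_eq]
    simp only [compB]
    simp only [hA]
    simp only [key hn i w]
    have hbig : ∑ σ : Equiv.Perm (Fin n), ((Equiv.Perm.sign σ : ℤ) : ℝ) *
          ((((n - 1).factorial * (n - (n - 1)).factorial : ℕ) : ℝ)⁻¹ * Gsum w i hn σ)
        = (((n - 1).factorial * (n - (n - 1)).factorial : ℕ) : ℝ)⁻¹ *
          (((n - 1).factorial : ℝ) * ((i : ℝ) * Fsum w (fun k => (k : ℕ) < n - (i - 1)))) := by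
      have step1 : ∑ σ : Equiv.Perm (Fin n), ((Equiv.Perm.sign σ : ℤ) : ℝ) *
            ((((n - 1).factorial * (n - (n - 1)).factorial : ℕ) : ℝ)⁻¹ * Gsum w i hn σ)
          = (((n - 1).factorial * (n - (n - 1)).factorial : ℕ) : ℝ)⁻¹ *
            ∑ σ : Equiv.Perm (Fin n), ((Equiv.Perm.sign σ : ℤ) : ℝ) * Gsum w i hn σ := by
        rw [Finset.mul_sum]
        exact Finset.sum_congr rfl (fun σ _ => by ring)
      rw [step1]
      congr 1
      calc ∑ σ : Equiv.Perm (Fin n), ((Equiv.Perm.sign σ : ℤ) : ℝ) * Gsum w i hn σ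
          = ∑ σ : Equiv.Perm (Fin n), ∑ τ : Equiv.Perm (Fin n),
              ((Equiv.Perm.sign σ : ℤ) : ℝ) * (if n - i ≤ ((τ ⟨0, hn⟩ : Fin n) : ℕ) then
                ((Equiv.Perm.sign τ : ℤ) : ℝ) * (Dmat w i σ τ).det else 0) :=
            Finset.sum_congr rfl (fun σ _ => by unfold Gsum; rw [Finset.mul_sum])
        _ = ∑ τ : Equiv.Perm (Fin n), ∑ σ : Equiv.Perm (Fin n),
              ((Equiv.Perm.sign σ : ℤ) : ℝ) * (if n - i ≤ ((τ ⟨0, hn⟩ : Fin n) : ℕ) then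
                ((Equiv.Perm.sign τ : ℤ) : ℝ) * (Dmat w i σ τ).det else 0) :=
            Finset.sum_comm
        _ = ∑ τ : Equiv.Perm (Fin n), (if n - i ≤ ((τ ⟨0, hn⟩ : Fin n) : ℕ) then
              Fsum w (fun k => (k : ℕ) < n - (i - 1)) else 0) :=
            Finset.sum_congr rfl (fun τ _ => perm_inner_sum hn hipos hi w τ)
        _ = ((n - 1).factorial : ℝ) * ∑ x : Fin n, (if n - i ≤ (x : ℕ) then
              Fsum w (fun k => (k : ℕ) < n - (i - 1)) else 0) :=
            sum_perm_zero hn (fun x => if n - i ≤ (x : ℕ) then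
              Fsum w (fun k => (k : ℕ) < n - (i - 1)) else 0)
        _ = ((n - 1).factorial : ℝ) * ((i : ℝ) * Fsum w (fun k => (k : ℕ) < n - (i - 1))) := by
            congr 1
            rw [Finset.sum_ite, Finset.sum_const, Finset.sum_const_zero, add_zero]
            have hcard : (Finset.univ.filter (fun x : Fin n => n - i ≤ (x : ℕ))).card = i := by
              rw [← Fintype.card_subtype]
              rw [Fintype.card_congr (Equiv.subtypeEquivRight
                (q := fun x : Fin n => ¬ ((x : ℕ) < n - i)) (fun x => by omega))]
              rw [Fintype.card_subtype_compl, card_val_lt (n - i) (by omega), Fintype.card_fin]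
              omega
            rw [hcard, nsmul_eq_mul]
    rw [hbig]
    have e3 : n - (n - 1) = 1 := by omega
    have e1 : n - (i - 1) = n - i + 1 := by omega
    simp only [e3, e1, Nat.factorial_one, mul_one]
    have e2 : i.factorial = i * (i - 1).factorial := by
      have h := Nat.factorial_succ (i - 1)
      rw [show i - 1 + 1 = i from by omega] at h
      exact h
    rw [e2]
    have f1 : ((n - 1).factorial : ℝ) ≠ 0 := Nat.cast_ne_zero.mpr (Nat.factorial_ne_zero _)
    have f2 : ((i - 1).factorial : ℝ) ≠ 0 := Nat.cast_ne_zero.mpr (Nat.factorial_ne_zero _)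
    have f3 : ((n - i + 1).factorial : ℝ) ≠ 0 := Nat.cast_ne_zero.mpr (Nat.factorial_ne_zero _)
    push_cast
    field_simp
end
end

section
/- On the unit tangent sphere bundle SM of an oriented Riemannian (n+1)-manifold, the structural equation α_j ∧ α_{n−j} = (−1)^j · binom(n,j) · α_0 ∧ α_n holds for every 0 ≤ j ≤ n. -/
noncomputable section

/-- the wedge product of two `n`-forms -/
def wedgeF {n : ℕ} (ω η : (Fin n → VS n) → ℝ) : (Fin (n + n) → VS n) → ℝ :=
  fun w => ((n.factorial * n.factorial : ℕ) : ℝ)⁻¹ *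
    ∑ σ : Equiv.Perm (Fin (n + n)), ((Equiv.Perm.sign σ : ℤ) : ℝ) *
      ω (fun k => w (σ (Fin.castAdd n k))) * η (fun k => w (σ (Fin.natAdd n k)))


namespace AlphaAux

open Finset Equiv








variable {α : Type*} [Fintype α] [DecidableEq α]

omit [Fintype α] in
lemma subtypeCongr_mem {T S : Finset α} (e : {x // x ∈ T} ≃ {x // x ∈ S})
    (f : {x // x ∉ T} ≃ {x // x ∉ S}) {x : α} (hx : x ∈ T) :
    Equiv.subtypeCongr e f x = (e ⟨x, hx⟩ : α) := by
  simp [Equiv.subtypeCongr, Equiv.sumCompl_symm_apply_of_pos hx]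

omit [Fintype α] in
lemma subtypeCongr_not_mem {T S : Finset α} (e : {x // x ∈ T} ≃ {x // x ∈ S})
    (f : {x // x ∉ T} ≃ {x // x ∉ S}) {x : α} (hx : x ∉ T) :
    Equiv.subtypeCongr e f x = (f ⟨x, hx⟩ : α) := by
  simp [Equiv.subtypeCongr, Equiv.sumCompl_symm_apply_of_neg hx]

omit [Fintype α] in
lemma image_subtypeCongr (T S : Finset α) (e : {x // x ∈ T} ≃ {x // x ∈ S})
    (f : {x // x ∉ T} ≃ {x // x ∉ S}) :
    T.image (Equiv.subtypeCongr e f) = S := by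
  ext y
  simp only [Finset.mem_image]
  constructor
  · rintro ⟨x, hx, rfl⟩
    rw [subtypeCongr_mem e f hx]
    exact (e ⟨x, hx⟩).2
  · intro hy
    refine ⟨(e.symm ⟨y, hy⟩ : α), (e.symm ⟨y, hy⟩).2, ?_⟩
    rw [subtypeCongr_mem e f (e.symm ⟨y, hy⟩).2]
    simp

lemma exists_perm_image (T S : Finset α) (hS : S.card = T.card) :
    ∃ σ : Equiv.Perm α, T.image σ = S := by
  have e : {x // x ∈ T} ≃ {x // x ∈ S} :=
    Fintype.equivOfCardEq (by simp [Fintype.card_coe, hS])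
  have f : {x // x ∉ T} ≃ {x // x ∉ S} :=
    Fintype.equivOfCardEq (by
      simp [Fintype.card_subtype_compl, Fintype.card_coe, hS])
  exact ⟨Equiv.subtypeCongr e f, image_subtypeCongr T S e f⟩








variable {α : Type*} [Fintype α] [DecidableEq α]

omit [Fintype α] in
lemma mem_iff_of_image {T S : Finset α} (σ : Equiv.Perm α) (h : T.image σ = S) (x : α) :
    x ∈ T ↔ σ x ∈ S := by
  subst h
  constructor
  · exact fun hx => Finset.mem_image_of_mem _ hx
  · intro hx
    obtain ⟨y, hy, hyx⟩ := Finset.mem_image.mp hx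
    rwa [← σ.injective hyx]

def fiberEquiv (T S : Finset α) :
    {σ : Equiv.Perm α // T.image σ = S} ≃
      (({x // x ∈ T} ≃ {x // x ∈ S}) × ({x // x ∉ T} ≃ {x // x ∉ S})) where
  toFun σ :=
    ⟨σ.1.subtypeEquiv (fun x => mem_iff_of_image σ.1 σ.2 x),
     σ.1.subtypeEquiv (fun x => (mem_iff_of_image σ.1 σ.2 x).not)⟩
  invFun ef := ⟨Equiv.subtypeCongr ef.1 ef.2, image_subtypeCongr T S ef.1 ef.2⟩
  left_inv := by
    rintro ⟨σ, h⟩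
    apply Subtype.ext
    apply Equiv.ext
    intro x
    by_cases hx : x ∈ T
    · rw [subtypeCongr_mem _ _ hx]; simp
    · rw [subtypeCongr_not_mem _ _ hx]; simp
  right_inv := by
    rintro ⟨e, f⟩
    apply Prod.ext
    · apply Equiv.ext
      rintro ⟨x, hx⟩
      apply Subtype.ext
      simp [subtypeCongr_mem e f hx]
    · apply Equiv.ext
      rintro ⟨x, hx⟩
      apply Subtype.ext
      simp [subtypeCongr_not_mem e f hx]

lemma card_fiber (T S : Finset α) (hS : S.card = T.card) :
    (Finset.univ.filter fun σ : Equiv.Perm α => T.image σ = S).card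
      = T.card.factorial * (Fintype.card α - T.card).factorial := by
  rw [← Fintype.card_subtype, Fintype.card_congr (fiberEquiv T S), Fintype.card_prod]
  have e : {x // x ∈ T} ≃ {x // x ∈ S} :=
    Fintype.equivOfCardEq (by simp [Fintype.card_coe, hS])
  have f : {x // x ∉ T} ≃ {x // x ∉ S} :=
    Fintype.equivOfCardEq (by simp [Fintype.card_subtype_compl, Fintype.card_coe, hS])
  rw [Fintype.card_equiv e, Fintype.card_equiv f]
  simp [Fintype.card_coe, Fintype.card_subtype_compl, hS]

lemma sum_perm_image (T : Finset α) (g : Finset α → ℝ) :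
    ∑ σ : Equiv.Perm α, g (T.image σ)
      = (T.card.factorial * (Fintype.card α - T.card).factorial : ℕ) *
        ∑ S ∈ Finset.univ.powersetCard T.card, g S := by
  rw [Finset.sum_comp g (fun σ : Equiv.Perm α => T.image ⇑σ)]
  have himg : (Finset.univ : Finset (Equiv.Perm α)).image (fun σ : Equiv.Perm α => T.image ⇑σ)
      = Finset.univ.powersetCard T.card := by
    ext S
    simp only [Finset.mem_image, Finset.mem_univ, true_and, Finset.mem_powersetCard_univ]
    constructor
    · rintro ⟨σ, rfl⟩; exact Finset.card_image_of_injective _ σ.injective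
    · intro h; exact exists_perm_image T S h
  rw [himg, Finset.mul_sum]
  refine Finset.sum_congr rfl fun S hS => ?_
  rw [card_fiber T S (Finset.mem_powersetCard_univ.mp hS)]
  push_cast
  rw [nsmul_eq_mul]
  push_cast
  ring





variable {n : ℕ}

def hIdx {n : ℕ} (b : Fin n) : Fin (2 * n + 1) := ⟨(b : ℕ) + 1, by have := b.2; omega⟩

lemma Bmap_vertIdx (v : VS n) (b : Fin n) : Bmap v (vertIdx b) = v (hIdx b) := by
  have h : n + 1 ≤ ((vertIdx b : Fin (2 * n + 1)) : ℕ) := by simp [vertIdx]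
  rw [Bmap, dif_pos h]
  congr 1
  apply Fin.ext
  simp [vertIdx, hIdx]
  omega

def DetC {n m : ℕ} (c : Fin m → Fin (2 * n + 1)) (u : Fin m → VS n) : ℝ :=
  Matrix.det (Matrix.of fun k l => u k (c l))

def phiS {n : ℕ} (S : Finset (Fin n)) (l : Fin n) : Fin (2 * n + 1) :=
  if l ∈ S then vertIdx l else hIdx l

def mixDet {n : ℕ} (A : Finset (Fin n)) (u : Fin n → VS n) : ℝ :=
  Matrix.det (Matrix.of fun m l => u m (if m ∈ A then vertIdx l else hIdx l))

lemma card_Tblk (i : ℕ) (hi : i ≤ n) :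
    (Finset.univ.filter fun k : Fin n => ¬ ((k : ℕ) < n - i)).card = i := by
  have himg : (Finset.univ.filter fun k : Fin n => ¬ ((k : ℕ) < n - i))
      = Finset.univ.image (fun b : Fin i => (⟨n - i + (b : ℕ), by have := b.2; omega⟩ : Fin n)) := by
    ext k
    simp only [Finset.mem_filter, Finset.mem_univ, true_and, Finset.mem_image, not_lt]
    constructor
    · intro h
      exact ⟨⟨(k : ℕ) - (n - i), by have := k.2; omega⟩, by apply Fin.ext; simp; omega⟩
    · rintro ⟨b, rfl⟩
      simp
  rw [himg, Finset.card_image_of_injective _ (fun a b hab => by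
        apply Fin.ext
        have := congrArg Fin.val hab
        simp at this
        omega),
      Finset.card_univ, Fintype.card_fin]

lemma compB_eq (i : ℕ) (u : Fin n → VS n) :
    compB alphaTop i u =
      ∑ σ : Equiv.Perm (Fin n),
        mixDet ((Finset.univ.filter fun k : Fin n => ¬ ((k : ℕ) < n - i)).image σ) u := by
  unfold compB
  refine Finset.sum_congr rfl fun σ _ => ?_
  set T := Finset.univ.filter fun k : Fin n => ¬ ((k : ℕ) < n - i) with hT
  have hmem : ∀ k : Fin n, (σ k ∈ T.image σ) ↔ ¬ ((k : ℕ) < n - i) := by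
    intro k
    rw [σ.injective.mem_finset_image]
    simp [hT]
  unfold alphaTop mixDet
  beta_reduce
  have hmat : (Matrix.of fun (k : Fin n) (l : Fin n) => (if (k : ℕ) < n - i then Bmap (u (σ k)) else u (σ k)) (vertIdx l))
      = (Matrix.of fun m l => u m (if m ∈ T.image σ then vertIdx l else hIdx l)).submatrix σ id := by
    ext k l
    simp only [Matrix.of_apply, Matrix.submatrix_apply, id]
    by_cases h : (k : ℕ) < n - i
    · rw [if_pos h, if_neg (fun hc => ((hmem k).mp hc) h), Bmap_vertIdx]
    · rw [if_neg h, if_pos ((hmem k).mpr h)]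
  rw [hmat, Matrix.det_permute, ← mul_assoc]
  rcases Int.units_eq_one_or (Equiv.Perm.sign σ) with h | h <;> simp [h]

lemma mix_sum_eq_col_sum (i : ℕ) (u : Fin n → VS n) :
    ∑ S ∈ Finset.univ.powersetCard i, mixDet S u
      = ∑ S ∈ Finset.univ.powersetCard i, DetC (phiS S) u := by
  unfold mixDet DetC phiS
  simp only [Matrix.det_apply', Matrix.of_apply]
  rw [Finset.sum_comm]
  conv_rhs => rw [Finset.sum_comm]
  refine Finset.sum_congr rfl fun τ _ => ?_
  refine Finset.sum_nbij' (fun S => S.image ⇑τ.symm) (fun S => S.image ⇑τ) ?_ ?_ ?_ ?_ ?_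
  · intro S hS
    rw [Finset.mem_powersetCard_univ] at *
    rw [Finset.card_image_of_injective _ τ.symm.injective]; exact hS
  · intro S hS
    rw [Finset.mem_powersetCard_univ] at *
    rw [Finset.card_image_of_injective _ τ.injective]; exact hS
  · intro S _
    simp [Finset.image_image]
  · intro S _
    simp [Finset.image_image]
  · intro S _
    congr 1
    refine Finset.prod_congr rfl fun l _ => ?_
    congr 1
    have : (l ∈ S.image ⇑τ.symm) ↔ τ l ∈ S := by
      conv_lhs => rw [show l = τ.symm (τ l) by simp]
      rw [τ.symm.injective.mem_finset_image]
    rw [if_congr this rfl rfl]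

lemma alphaF_eq (i : ℕ) (hi : i ≤ n) (u : Fin n → VS n) :
    alphaF (i : ℤ) u = ∑ S ∈ Finset.univ.powersetCard i, DetC (phiS S) u := by
  rw [alphaF, if_pos ⟨Int.natCast_nonneg i, by exact_mod_cast hi⟩]
  simp only [Int.toNat_natCast]
  rw [compB_eq]
  have hs := sum_perm_image (Finset.univ.filter fun k : Fin n => ¬ ((k : ℕ) < n - i))
    (fun S => mixDet S u)
  beta_reduce at hs
  rw [hs, card_Tblk i hi, Fintype.card_fin, ← mul_assoc,
    inv_mul_cancel₀ (by exact_mod_cast Nat.cast_ne_zero.mpr (Nat.mul_ne_zero (Nat.factorial_ne_zero _) (Nat.factorial_ne_zero _))), one_mul]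
  exact mix_sum_eq_col_sum i u



def bigCol {n : ℕ} (c₁ c₂ : Fin n → Fin (2 * n + 1)) : Fin (n + n) → Fin (2 * n + 1) :=
  fun x => Sum.elim c₁ c₂ (finSumFinEquiv.symm x)

lemma bigCol_castAdd (c₁ c₂ : Fin n → Fin (2 * n + 1)) (l : Fin n) :
    bigCol c₁ c₂ (Fin.castAdd n l) = c₁ l := by
  unfold bigCol
  rw [finSumFinEquiv_symm_apply_castAdd]
  rfl

lemma bigCol_natAdd (c₁ c₂ : Fin n → Fin (2 * n + 1)) (l : Fin n) :
    bigCol c₁ c₂ (Fin.natAdd n l) = c₂ l := by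
  unfold bigCol
  rw [finSumFinEquiv_symm_apply_natAdd]
  rfl

lemma wedge_sum (A B : Finset (Finset (Fin n)))
    (f g : Finset (Fin n) → (Fin n → VS n) → ℝ) (w : Fin (n + n) → VS n) :
    wedgeF (fun u => ∑ S ∈ A, f S u) (fun u => ∑ T ∈ B, g T u) w
      = ∑ S ∈ A, ∑ T ∈ B, wedgeF (f S) (g T) w := by
  unfold wedgeF
  trans ((n.factorial * n.factorial : ℕ) : ℝ)⁻¹ *
    ∑ σ : Equiv.Perm (Fin (n + n)), ∑ S ∈ A, ∑ T ∈ B,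
      ((Equiv.Perm.sign σ : ℤ) : ℝ) * f S (fun k => w (σ (Fin.castAdd n k)))
        * g T (fun k => w (σ (Fin.natAdd n k)))
  · congr 1
    refine Finset.sum_congr rfl fun σ _ => ?_
    rw [mul_assoc, Finset.sum_mul_sum, Finset.mul_sum]
    refine Finset.sum_congr rfl fun S _ => ?_
    rw [Finset.mul_sum]
    refine Finset.sum_congr rfl fun T _ => ?_
    ring
  · rw [Finset.sum_comm, Finset.mul_sum]
    refine Finset.sum_congr rfl fun S _ => ?_
    rw [Finset.sum_comm, Finset.mul_sum]

lemma sum3_comm {M : Type*} [AddCommMonoid M] {A B C : Type*} [Fintype A] [Fintype B]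
    [Fintype C] (f : A → B → C → M) :
    ∑ a : A, ∑ b : B, ∑ c : C, f a b c = ∑ b : B, ∑ c : C, ∑ a : A, f a b c := by
  rw [Finset.sum_comm]
  exact Finset.sum_congr rfl fun b _ => Finset.sum_comm

lemma wedge_DetC (c₁ c₂ : Fin n → Fin (2 * n + 1)) (w : Fin (n + n) → VS n) :
    wedgeF (DetC c₁) (DetC c₂) w = DetC (bigCol c₁ c₂) w := by
  unfold wedgeF DetC
  have hexp : ∀ σ : Equiv.Perm (Fin (n + n)),
      ((Equiv.Perm.sign σ : ℤ) : ℝ)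
        * Matrix.det (Matrix.of fun k l => w (σ (Fin.castAdd n k)) (c₁ l))
        * Matrix.det (Matrix.of fun k l => w (σ (Fin.natAdd n k)) (c₂ l))
      = ∑ τ : Equiv.Perm (Fin n), ∑ ρ : Equiv.Perm (Fin n),
          ((Equiv.Perm.sign σ : ℤ) : ℝ) * ((Equiv.Perm.sign τ : ℤ) : ℝ)
            * ((Equiv.Perm.sign ρ : ℤ) : ℝ)
            * ((∏ l, w (σ (Fin.castAdd n (τ l))) (c₁ l))
              * (∏ l, w (σ (Fin.natAdd n (ρ l))) (c₂ l))) := by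
    intro σ
    rw [Matrix.det_apply', Matrix.det_apply', mul_assoc, Finset.sum_mul_sum, Finset.mul_sum]
    refine Finset.sum_congr rfl fun τ _ => ?_
    rw [Finset.mul_sum]
    refine Finset.sum_congr rfl fun ρ _ => ?_
    simp only [Matrix.of_apply]
    ring
  have reindex : ∀ (τ ρ : Equiv.Perm (Fin n)),
      (∑ σ : Equiv.Perm (Fin (n + n)),
        ((Equiv.Perm.sign σ : ℤ) : ℝ) * ((Equiv.Perm.sign τ : ℤ) : ℝ)
          * ((Equiv.Perm.sign ρ : ℤ) : ℝ)
          * ((∏ l, w (σ (Fin.castAdd n (τ l))) (c₁ l))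
            * (∏ l, w (σ (Fin.natAdd n (ρ l))) (c₂ l))))
      = ∑ π : Equiv.Perm (Fin (n + n)), ((Equiv.Perm.sign π : ℤ) : ℝ)
          * ∏ x, w (π x) (bigCol c₁ c₂ x) := by
    intro τ ρ
    set μ : Equiv.Perm (Fin (n + n)) := finSumFinEquiv.permCongr (τ.sumCongr ρ) with hμ
    have hμc : ∀ l, μ (Fin.castAdd n l) = Fin.castAdd n (τ l) := by
      intro l
      rw [hμ, Equiv.permCongr_apply, finSumFinEquiv_symm_apply_castAdd]
      simp [finSumFinEquiv_apply_left]
    have hμn : ∀ l, μ (Fin.natAdd n l) = Fin.natAdd n (ρ l) := by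
      intro l
      rw [hμ, Equiv.permCongr_apply, finSumFinEquiv_symm_apply_natAdd]
      simp [finSumFinEquiv_apply_right]
    have hsμ : Equiv.Perm.sign μ = Equiv.Perm.sign τ * Equiv.Perm.sign ρ := by
      rw [hμ, Equiv.Perm.sign_permCongr, Equiv.Perm.sign_sumCongr]
    refine Fintype.sum_equiv (Equiv.mulRight μ) _ _ fun σ => ?_
    have happ : ∀ x, (Equiv.mulRight μ σ) x = σ (μ x) := fun x => rfl
    have hsgn : Equiv.Perm.sign (Equiv.mulRight μ σ) =
        Equiv.Perm.sign σ * (Equiv.Perm.sign τ * Equiv.Perm.sign ρ) := by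
      show Equiv.Perm.sign (σ * μ) = _
      rw [map_mul, hsμ]
    rw [Fin.prod_univ_add]
    simp only [happ, hμc, hμn, bigCol_castAdd, bigCol_natAdd, hsgn]
    push_cast
    ring
  rw [Finset.sum_congr rfl fun σ _ => hexp σ, sum3_comm,
    Finset.sum_congr rfl fun τ _ => Finset.sum_congr rfl fun ρ _ => reindex τ ρ,
    Finset.sum_const, Finset.sum_const, Finset.card_univ, Fintype.card_perm,
    Fintype.card_fin, smul_smul, nsmul_eq_mul, ← mul_assoc,
    inv_mul_cancel₀ (Nat.cast_ne_zero.mpr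
      (Nat.mul_ne_zero (Nat.factorial_ne_zero _) (Nat.factorial_ne_zero _))), one_mul,
    Matrix.det_apply']
  rfl

lemma DetC_zero {m : ℕ} (c : Fin m → Fin (2 * n + 1)) (w : Fin m → VS n)
    {x y : Fin m} (hxy : x ≠ y) (h : c x = c y) : DetC c w = 0 := by
  refine Matrix.det_zero_of_column_eq hxy fun k => ?_
  simp [Matrix.of_apply, h]

lemma DetC_comp_perm {m : ℕ} (c : Fin m → Fin (2 * n + 1)) (π : Equiv.Perm (Fin m))
    (w : Fin m → VS n) :
    DetC (c ∘ π) w = ((Equiv.Perm.sign π : ℤ) : ℝ) * DetC c w := by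
  unfold DetC
  rw [show (Matrix.of fun k l => w k ((c ∘ ⇑π) l))
      = (Matrix.of fun k l => w k (c l)).submatrix id ⇑π from rfl,
    Matrix.det_permute']



lemma ca_ne_na (a b : Fin n) : Fin.castAdd n a ≠ Fin.natAdd n b := by
  intro h
  have h2 := congrArg Fin.val h
  simp only [Fin.coe_castAdd, Fin.coe_natAdd] at h2
  have := a.2
  omega

lemma ca_ne_ca {a b : Fin n} (hab : a ≠ b) : Fin.castAdd n a ≠ Fin.castAdd n b := by
  intro h
  have h2 := congrArg Fin.val h
  simp only [Fin.coe_castAdd] at h2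
  exact hab (Fin.ext h2)

lemma na_ne_na {a b : Fin n} (hab : a ≠ b) : Fin.natAdd n a ≠ Fin.natAdd n b := by
  intro h
  have h2 := congrArg Fin.val h
  simp only [Fin.coe_natAdd] at h2
  exact hab (Fin.ext (by omega))

def swapS (S : Finset (Fin n)) : Equiv.Perm (Fin (n + n)) :=
  S.noncommProd (fun m => Equiv.swap (Fin.castAdd n m) (Fin.natAdd n m)) (by
    intro a _ b _ hab
    apply Equiv.Perm.Disjoint.commute
    intro x
    by_cases hx : x = Fin.castAdd n a ∨ x = Fin.natAdd n a
    · right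
      rcases hx with rfl | rfl
      · exact Equiv.swap_apply_of_ne_of_ne (ca_ne_ca hab) (ca_ne_na a b)
      · exact Equiv.swap_apply_of_ne_of_ne (Ne.symm (ca_ne_na b a)) (na_ne_na hab)
    · left
      push_neg at hx
      exact Equiv.swap_apply_of_ne_of_ne hx.1 hx.2)

lemma swapS_insert (a : Fin n) (S : Finset (Fin n)) (ha : a ∉ S) :
    swapS (insert a S) = Equiv.swap (Fin.castAdd n a) (Fin.natAdd n a) * swapS S :=
  Finset.noncommProd_insert_of_notMem _ _ _ _ ha

lemma swapS_castAdd (S : Finset (Fin n)) (m : Fin n) :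
    swapS S (Fin.castAdd n m) = if m ∈ S then Fin.natAdd n m else Fin.castAdd n m := by
  induction S using Finset.induction_on with
  | empty => simp [swapS]
  | @insert a S ha ih =>
    rw [swapS_insert a S ha, Equiv.Perm.mul_apply, ih]
    by_cases hm : m = a
    · subst hm
      rw [if_neg ha, if_pos (Finset.mem_insert_self m S), Equiv.swap_apply_left]
    · by_cases hmS : m ∈ S
      · rw [if_pos hmS, if_pos (Finset.mem_insert_of_mem hmS)]
        exact Equiv.swap_apply_of_ne_of_ne (Ne.symm (ca_ne_na a m)) (na_ne_na hm)
      · rw [if_neg hmS, if_neg (by simp [hm, hmS])]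
        exact Equiv.swap_apply_of_ne_of_ne (ca_ne_ca hm) (ca_ne_na m a)

lemma swapS_natAdd (S : Finset (Fin n)) (m : Fin n) :
    swapS S (Fin.natAdd n m) = if m ∈ S then Fin.castAdd n m else Fin.natAdd n m := by
  induction S using Finset.induction_on with
  | empty => simp [swapS]
  | @insert a S ha ih =>
    rw [swapS_insert a S ha, Equiv.Perm.mul_apply, ih]
    by_cases hm : m = a
    · subst hm
      rw [if_neg ha, if_pos (Finset.mem_insert_self m S), Equiv.swap_apply_right]
    · by_cases hmS : m ∈ S
      · rw [if_pos hmS, if_pos (Finset.mem_insert_of_mem hmS)]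
        exact Equiv.swap_apply_of_ne_of_ne (ca_ne_ca hm) (ca_ne_na m a)
      · rw [if_neg hmS, if_neg (by simp [hm, hmS])]
        exact Equiv.swap_apply_of_ne_of_ne (Ne.symm (ca_ne_na a m)) (na_ne_na hm)

lemma sign_swapS (S : Finset (Fin n)) :
    Equiv.Perm.sign (swapS S) = (-1) ^ S.card := by
  induction S using Finset.induction_on with
  | empty => simp [swapS]
  | @insert a S ha ih =>
    rw [swapS_insert a S ha, map_mul, ih, Equiv.Perm.sign_swap (ca_ne_na a a),
      Finset.card_insert_of_notMem ha, pow_succ]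
    exact (mul_comm _ _)



end AlphaAux

/-- On the unit tangent sphere bundle of an oriented Riemannian
`(n+1)`-manifold, the structural equation
`α_j ∧ α_{n-j} = (-1)^j · C(n,j) · α_0 ∧ α_n` holds for every `0 ≤ j ≤ n`. -/
theorem alpha_wedge_identity (n : ℕ) (j : ℕ) (hj : j ≤ n) :
    wedgeF (alphaF (n := n) (j : ℤ)) (alphaF ((n : ℤ) - (j : ℤ))) =
      fun w => ((-1 : ℝ) ^ j * (n.choose j : ℝ)) *
        wedgeF (alphaF (n := n) 0) (alphaF (n : ℤ)) w := by
  classical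
  funext w
  have hnj : ((n : ℤ) - (j : ℤ)) = ((n - j : ℕ) : ℤ) := by omega
  have h0 : alphaF (n := n) 0 = fun u => AlphaAux.DetC (AlphaAux.phiS (∅ : Finset (Fin n))) u := by
    funext u
    have h := AlphaAux.alphaF_eq 0 (Nat.zero_le n) u
    rw [Nat.cast_zero] at h
    rw [h, Finset.powersetCard_zero, Finset.sum_singleton]
  have hpcn : (Finset.univ.powersetCard n : Finset (Finset (Fin n))) = {Finset.univ} := by
    ext S
    rw [Finset.mem_powersetCard_univ, Finset.mem_singleton]
    constructor
    · intro h; exact Finset.eq_univ_of_card S (by rw [h, Fintype.card_fin])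
    · rintro rfl; rw [Finset.card_univ, Fintype.card_fin]
  have hn : alphaF (n := n) (n : ℤ) = fun u =>
      AlphaAux.DetC (AlphaAux.phiS (Finset.univ : Finset (Fin n))) u := by
    funext u
    rw [AlphaAux.alphaF_eq n le_rfl u, hpcn, Finset.sum_singleton]
  have hj1 : alphaF (n := n) (j : ℤ) = fun u =>
      ∑ S ∈ Finset.univ.powersetCard j, AlphaAux.DetC (AlphaAux.phiS S) u := by
    funext u; exact AlphaAux.alphaF_eq j hj u
  have hj2 : alphaF (n := n) ((n : ℤ) - (j : ℤ)) = fun u =>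
      ∑ T ∈ Finset.univ.powersetCard (n - j), AlphaAux.DetC (AlphaAux.phiS T) u := by
    funext u; rw [hnj]; exact AlphaAux.alphaF_eq (n - j) (Nat.sub_le n j) u
  rw [h0, hn, hj1, hj2]
  have hL := AlphaAux.wedge_sum (Finset.univ.powersetCard j) (Finset.univ.powersetCard (n - j))
    (fun S => AlphaAux.DetC (AlphaAux.phiS S)) (fun T => AlphaAux.DetC (AlphaAux.phiS T)) w
  rw [hL, AlphaAux.wedge_DetC]
  set c0 := AlphaAux.bigCol (AlphaAux.phiS (∅ : Finset (Fin n)))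
    (AlphaAux.phiS (Finset.univ : Finset (Fin n))) with hc0
  -- evaluate the double sum
  have hinner : ∀ S ∈ Finset.univ.powersetCard j,
      (∑ T ∈ Finset.univ.powersetCard (n - j),
        wedgeF (AlphaAux.DetC (AlphaAux.phiS S)) (AlphaAux.DetC (AlphaAux.phiS T)) w)
      = ((-1 : ℝ) ^ j) * AlphaAux.DetC c0 w := by
    intro S hS
    have hScard : S.card = j := Finset.mem_powersetCard_univ.mp hS
    rw [Finset.sum_eq_single Sᶜ]
    · -- the surviving term
      rw [AlphaAux.wedge_DetC]
      have hcol : AlphaAux.bigCol (AlphaAux.phiS S) (AlphaAux.phiS Sᶜ) = c0 ∘ (AlphaAux.swapS S) := by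
        funext x
        induction x using Fin.addCases with
        | left l =>
          simp only [Function.comp_apply, AlphaAux.swapS_castAdd, AlphaAux.bigCol_castAdd]
          by_cases hl : l ∈ S
          · rw [if_pos hl, hc0, AlphaAux.bigCol_natAdd]
            simp [AlphaAux.phiS, hl]
          · rw [if_neg hl, hc0, AlphaAux.bigCol_castAdd]
            simp [AlphaAux.phiS, hl]
        | right l =>
          simp only [Function.comp_apply, AlphaAux.swapS_natAdd, AlphaAux.bigCol_natAdd]
          by_cases hl : l ∈ S
          · rw [if_pos hl, hc0, AlphaAux.bigCol_castAdd]
            simp [AlphaAux.phiS, hl, Finset.mem_compl]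
          · rw [if_neg hl, hc0, AlphaAux.bigCol_natAdd]
            simp [AlphaAux.phiS, hl, Finset.mem_compl]
      rw [hcol, AlphaAux.DetC_comp_perm, AlphaAux.sign_swapS, hScard]
      norm_num
    · -- other terms vanish
      intro T hT hTne
      have hTcard : T.card = n - j := Finset.mem_powersetCard_univ.mp hT
      have hnotsub : ¬ T ⊆ Sᶜ := by
        intro hsub
        exact hTne (Finset.eq_of_subset_of_card_le hsub
          (by rw [Finset.card_compl, Fintype.card_fin, hScard, hTcard]))
      obtain ⟨m, hmT, hmS⟩ := Finset.not_subset.mp hnotsub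
      rw [Finset.mem_compl, not_not] at hmS
      rw [AlphaAux.wedge_DetC]
      refine AlphaAux.DetC_zero _ w (AlphaAux.ca_ne_na m m) ?_
      rw [AlphaAux.bigCol_castAdd, AlphaAux.bigCol_natAdd]
      simp [AlphaAux.phiS, hmS, hmT]
    · -- Sᶜ is in the index set
      intro habs
      exact absurd (Finset.mem_powersetCard_univ.mpr
        (by rw [Finset.card_compl, Fintype.card_fin, hScard])) habs
  rw [Finset.sum_congr rfl hinner, Finset.sum_const, Finset.card_powersetCard,
    Finset.card_univ, Fintype.card_fin, nsmul_eq_mul]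
  ring
end
end
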